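/- Let 0 < ε < 1, c > 0 and m > 0 be real numbers and let f(t) = c·t^(1-ε). If x, a, b are real numbers with 0 ≤ x < m/2, a ≥ x, b ≥ x, and a + b = m, then f(a) + f(b) ≥ f(m - x) + f(x). -/
import Mathlib

theorem stmt_3 (ε c m : ℝ) (hε0 : 0 < ε) (hε1 : ε < 1) (hc : 0 < c) (hm : 0 < m)
    (x a b : ℝ) (hx0 : 0 ≤ x) (hxm : x < m / 2) (ha : a ≥ x) (hb : b ≥ x)
    (hab : a + b = m) :
    c * a ^ (1 - ε) + c * b ^ (1 - ε) ≥ c * (m - x) ^ (1 - ε) + c * x ^ (1 - ε) := by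
  set p := 1 - ε with hp
  have hconc : ConcaveOn ℝ (Set.Ici 0) (fun t : ℝ => t ^ p) :=
    Real.concaveOn_rpow (by simp [hp]; linarith) (by simp [hp]; linarith)
  set y := m - x with hy
  have hay : a ≤ y := by simp [hy]; linarith
  have hxy : x < y := by simp [hy]; linarith
  have hne : y - x ≠ 0 := by linarith
  set t := (y - a) / (y - x) with ht
  have ht0 : 0 ≤ t := by
    apply div_nonneg <;> linarith
  have ht1 : t ≤ 1 := by
    rw [ht, div_le_one (by linarith)]; linarith
  have hxmem : x ∈ Set.Ici (0:ℝ) := hx0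
  have hymem : y ∈ Set.Ici (0:ℝ) := by simp [hy]; linarith
  have hA : t • x + (1 - t) • y = a := by
    simp only [smul_eq_mul, ht]; field_simp; ring
  have hB : (1 - t) • x + t • y = b := by
    have hbval : b = m - a := by linarith
    simp only [smul_eq_mul, ht]; field_simp; nlinarith [hbval]
  have h1 := hconc.2 hxmem hymem ht0 (show (0:ℝ) ≤ 1 - t by linarith) (show t + (1 - t) = 1 by ring)
  have h2 := hconc.2 hxmem hymem (show (0:ℝ) ≤ 1 - t by linarith) ht0 (show (1 - t) + t = 1 by ring)
  rw [hA] at h1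
  rw [hB] at h2
  simp only [smul_eq_mul] at h1 h2
  have key : y ^ p + x ^ p ≤ a ^ p + b ^ p := by nlinarith [h1, h2]
  nlinarith [mul_le_mul_of_nonneg_left key hc.le]
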